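/- arXiv:2001.10658 — 2 statements merged into one kernel-verified Lean document; each statement's English description precedes it below -/
import Mathlib

section
/- Let H be a real Hilbert space and F : H → H be κ-Lipschitz continuous and η-strongly monotone with κ ≥ η > 0. If μ ∈ (0, 2η/κ²), then for each β ∈ (0,1], the mapping U^β := Id − μβF satisfies ‖U^β x − U^β y‖ ≤ (1 − βτ)‖x − y‖ for all x, y ∈ H, where τ := 1 − √(1 + μ²κ² − 2μη) ∈ (0,1]. -/
open RealInnerProductSpace

theorem stmt_0
    {H : Type*} [NormedAddCommGroup H] [InnerProductSpace ℝ H]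
    (F : H → H) (κ η : ℝ) (hκη : κ ≥ η) (hη : η > 0)
    (hLip : ∀ x y : H, ‖F x - F y‖ ≤ κ * ‖x - y‖)
    (hMono : ∀ x y : H, ⟪F x - F y, x - y⟫ ≥ η * ‖x - y‖ ^ 2)
    (μ : ℝ) (hμ : μ ∈ Set.Ioo 0 (2 * η / κ ^ 2))
    (β : ℝ) (hβ : β ∈ Set.Ioc 0 1)
    (τ : ℝ) (hτ : τ = 1 - Real.sqrt (1 + μ ^ 2 * κ ^ 2 - 2 * μ * η)) :
    τ ∈ Set.Ioc 0 1 ∧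
      ∀ x y : H, ‖(x - (μ * β) • F x) - (y - (μ * β) • F y)‖ ≤ (1 - β * τ) * ‖x - y‖ := by
  obtain ⟨hμ0, hμ2⟩ := hμ
  obtain ⟨hβ0, hβ1⟩ := hβ
  have hκ : (0:ℝ) < κ := lt_of_lt_of_le hη hκη
  have hμκ : μ * κ ^ 2 < 2 * η := by
    rwa [lt_div_iff₀ (by positivity : (0:ℝ) < κ ^ 2)] at hμ2
  have hs2nn : (0:ℝ) ≤ 1 + μ ^ 2 * κ ^ 2 - 2 * μ * η := by
    nlinarith [sq_nonneg (1 - μ * η),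
      mul_nonneg (sq_nonneg μ) (by nlinarith : (0:ℝ) ≤ κ ^ 2 - η ^ 2)]
  have hs2lt : 1 + μ ^ 2 * κ ^ 2 - 2 * μ * η < 1 := by nlinarith
  set s := Real.sqrt (1 + μ ^ 2 * κ ^ 2 - 2 * μ * η) with hs
  have hsnn : 0 ≤ s := Real.sqrt_nonneg _
  have hssq : s ^ 2 = 1 + μ ^ 2 * κ ^ 2 - 2 * μ * η := Real.sq_sqrt hs2nn
  have hslt : s < 1 := by
    have := Real.sqrt_lt_sqrt hs2nn hs2lt
    simpa using this
  have hτmem : τ ∈ Set.Ioc 0 1 := by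
    constructor <;> simp [hτ] <;> linarith
  refine ⟨hτmem, fun x y => ?_⟩
  -- key contraction estimate for I - μ F
  have key : ‖(x - y) - μ • (F x - F y)‖ ≤ s * ‖x - y‖ := by
    have hsq : ‖(x - y) - μ • (F x - F y)‖ ^ 2 ≤ (s * ‖x - y‖) ^ 2 := by
      have hexp := @norm_sub_sq_real H _ _ (x - y) (μ • (F x - F y))
      rw [inner_smul_right, norm_smul, Real.norm_eq_abs] at hexp
      have hsym : ⟪x - y, F x - F y⟫ = ⟪F x - F y, x - y⟫ := real_inner_comm _ _
      have hLsq : ‖F x - F y‖ ^ 2 ≤ κ ^ 2 * ‖x - y‖ ^ 2 := by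
        nlinarith [hLip x y, norm_nonneg (F x - F y), norm_nonneg (x - y)]
      have hM := hMono x y
      rw [hsym] at hexp
      have habs : |μ| = μ := abs_of_pos hμ0
      rw [habs] at hexp
      rw [hexp]
      nlinarith [hssq, hM, hLsq, sq_nonneg ‖x - y‖, sq_nonneg μ, hμ0.le,
        mul_le_mul_of_nonneg_left hM (by positivity : (0:ℝ) ≤ 2 * μ),
        mul_le_mul_of_nonneg_left hLsq (sq_nonneg μ)]
    have h1 : 0 ≤ s * ‖x - y‖ := by positivity
    exact le_of_pow_le_pow_left₀ two_ne_zero h1 hsq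
  have hdecomp : (x - (μ * β) • F x) - (y - (μ * β) • F y)
      = (1 - β) • (x - y) + β • ((x - y) - μ • (F x - F y)) := by
    module
  calc ‖(x - (μ * β) • F x) - (y - (μ * β) • F y)‖
      = ‖(1 - β) • (x - y) + β • ((x - y) - μ • (F x - F y))‖ := by rw [hdecomp]
    _ ≤ ‖(1 - β) • (x - y)‖ + ‖β • ((x - y) - μ • (F x - F y))‖ := norm_add_le _ _
    _ = (1 - β) * ‖x - y‖ + β * ‖(x - y) - μ • (F x - F y)‖ := by
        rw [norm_smul, norm_smul, Real.norm_eq_abs, Real.norm_eq_abs,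
          abs_of_nonneg (by linarith), abs_of_pos hβ0]
    _ ≤ (1 - β) * ‖x - y‖ + β * (s * ‖x - y‖) := by
        have := mul_le_mul_of_nonneg_left key (le_of_lt hβ0)
        linarith
    _ = (1 - β * τ) * ‖x - y‖ := by rw [hτ]; ring
end

section
/- Let T₁, …, T_m : H → H be cutter operators with ∩_{i=1}^m Fix T_i ≠ ∅. Set T := T_m⋯T₁, S_i := T_i⋯T₁ for i = 1,…,m, and S₀ := Id. Then for any x ∈ H, any z ∈ ∩_{i=1}^m Fix T_i, and any L ≥ ‖x − z‖ with L > 0: (1/(2L)) ∑_{i=1}^m ‖S_i x − S_{i−1} x‖² ≤ ‖Tx − x‖. -/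
/-!
Each cutter step moves the current point `y` to `T y` in such a way that the angle at `T y` between
`y` and any common fixed point `z` is not acute, so `‖T y - z‖² + ‖T y - y‖² ≤ ‖y - z‖²`. Summing along
the orbit `S₀ x, …, S_m x` gives `∑ ‖S_i x - S_{i-1} x‖² ≤ ‖x - z‖² - ‖T x - z‖²`, and the right-hand
side factors as `(‖x - z‖ - ‖T x - z‖)(‖x - z‖ + ‖T x - z‖) ≤ ‖T x - x‖ · 2L`.
-/

open RealInnerProductSpace

/-- `compSeq T n = T (n-1) ∘ ⋯ ∘ T 0`, i.e. the composition `S_n := T_n ⋯ T_1`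
(with 1-based indexing as in the paper). -/
def compSeq {H : Type*} (T : ℕ → H → H) : ℕ → H → H
  | 0 => id
  | n + 1 => T n ∘ compSeq T n

section

variable {H : Type*}

theorem compSeq_succ_apply (T : ℕ → H → H) (n : ℕ) (x : H) :
    compSeq T (n + 1) x = T n (compSeq T n x) :=
  rfl

variable [NormedAddCommGroup H] [InnerProductSpace ℝ H]

theorem norm_sub_sq_add_norm_sub_sq_le_of_inner_nonpos {y u z : H} (h : ⟪y - u, z - u⟫ ≤ 0) :
    ‖u - z‖ ^ 2 + ‖u - y‖ ^ 2 ≤ ‖y - z‖ ^ 2 := by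
  have hexpand : ‖y - z‖ ^ 2 = ‖y - u‖ ^ 2 - 2 * ⟪y - u, z - u⟫ + ‖z - u‖ ^ 2 := by
    rw [← norm_sub_sq_real, sub_sub_sub_cancel_right]
  rw [hexpand, norm_sub_rev u z, norm_sub_rev u y]
  linarith

theorem sum_sq_norm_compSeq_sub_add_sq_le {T : ℕ → H → H} {n : ℕ} {z : H}
    (hT : ∀ i < n, ∀ y : H, ⟪y - T i y, z - T i y⟫ ≤ 0) (x : H) :
    ∑ i ∈ Finset.range n, ‖compSeq T (i + 1) x - compSeq T i x‖ ^ 2 + ‖compSeq T n x - z‖ ^ 2 ≤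
      ‖x - z‖ ^ 2 := by
  induction n with
  | zero => simp [compSeq]
  | succ k ih =>
    have hstep := norm_sub_sq_add_norm_sub_sq_le_of_inner_nonpos
      (hT k k.lt_succ_self (compSeq T k x))
    have ihk := ih fun i hi ↦ hT i (hi.trans k.lt_succ_self)
    rw [Finset.sum_range_succ, compSeq_succ_apply]
    linarith

end

theorem stmt_10 {H : Type*} [NormedAddCommGroup H] [InnerProductSpace ℝ H]
    (m : ℕ) (T : ℕ → H → H)
    (hcutter : ∀ i < m, ∀ x : H, ∀ z ∈ {x : H | T i x = x},
      ⟪x - T i x, z - T i x⟫ ≤ 0)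
    (x z : H) (hz : ∀ i < m, T i z = z)
    (L : ℝ) (hL : L ≥ ‖x - z‖) (hLpos : L > 0) :
    (1 / (2 * L)) * ∑ i ∈ Finset.range m,
        ‖compSeq T (i + 1) x - compSeq T i x‖ ^ 2 ≤
      ‖compSeq T m x - x‖ := by
  have hsum := sum_sq_norm_compSeq_sub_add_sq_le (fun i hi y ↦ hcutter i hi y z (hz i hi)) x
  have hsum_nonneg : 0 ≤ ∑ i ∈ Finset.range m, ‖compSeq T (i + 1) x - compSeq T i x‖ ^ 2 :=
    Finset.sum_nonneg fun i _ ↦ sq_nonneg _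
  have hdist_le : ‖compSeq T m x - z‖ ≤ ‖x - z‖ :=
    (pow_le_pow_iff_left₀ (norm_nonneg _) (norm_nonneg _) two_ne_zero).1 (by linarith)
  have hdist_diff : ‖x - z‖ - ‖compSeq T m x - z‖ ≤ ‖compSeq T m x - x‖ := by
    simpa only [sub_sub_sub_cancel_right, norm_sub_rev x] using
      norm_sub_norm_le (x - z) (compSeq T m x - z)
  rw [one_div_mul_eq_div, div_le_iff₀ (by positivity)]
  calc ∑ i ∈ Finset.range m, ‖compSeq T (i + 1) x - compSeq T i x‖ ^ 2
      ≤ (‖x - z‖ - ‖compSeq T m x - z‖) * (‖x - z‖ + ‖compSeq T m x - z‖) := by linarith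
    _ ≤ ‖compSeq T m x - x‖ * (2 * L) := by gcongr; linarith
end
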